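/- arXiv:2007.13032 — 3 statements merged into one kernel-verified Lean document; each statement's English description precedes it below -/
import Mathlib

section
/- Let (X,f) be a dynamical system with fⁿ quasi-continuous for all n ∈ ℕ, where X is a perfect Hausdorff space. If (X,f) satisfies TT (for every pair of nonempty open sets U, V, N(U,V) = N₊(U,V) ∪ N₊(V,U) is nonempty), then (X,f) satisfies TT₊₊: for every pair of nonempty open sets V, W ⊆ X, the set N₊(V,W) = {n ∈ ℕ : fⁿ(V) ∩ W ≠ ∅} is infinite. -/
open Set Function Topology

def QuasiCont {X Y : Type*} [TopologicalSpace X] [TopologicalSpace Y] (f : X → Y) : Prop :=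
  ∀ (x : X) (W : Set Y), IsOpen W → f x ∈ W → ∀ U : Set X, IsOpen U → x ∈ U →
    ∃ V : Set X, IsOpen V ∧ V.Nonempty ∧ V ⊆ U ∧ f '' V ⊆ W

def Nplus {X : Type*} (f : X → X) (A B : Set X) : Set ℕ :=
  {n : ℕ | (f^[n] '' A ∩ B).Nonempty}

def omegaLimitSet {X : Type*} [TopologicalSpace X] (f : X → X) (x : X) : Set X :=
  ⋂ k : ℕ, closure {y : X | ∃ n ≥ k, f^[n] x = y}

/-- TT: for all nonempty open U, V, N(U,V) = N₊(U,V) ∪ N₊(V,U) is nonempty. -/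
def TTprop {X : Type*} [TopologicalSpace X] (f : X → X) : Prop :=
  ∀ U V : Set X, IsOpen U → U.Nonempty → IsOpen V → V.Nonempty →
    (Nplus f U V ∪ Nplus f V U).Nonempty

/-- TT₊ -/
def TTplus {X : Type*} [TopologicalSpace X] (f : X → X) : Prop :=
  ∀ U V : Set X, IsOpen U → U.Nonempty → IsOpen V → V.Nonempty →
    (Nplus f U V).Nonempty

/-- X has a countable π-base. -/
def CountablePiBase (X : Type*) [TopologicalSpace X] : Prop :=
  ∃ P : ℕ → Set X, (∀ n, IsOpen (P n) ∧ (P n).Nonempty) ∧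
    ∀ U : Set X, IsOpen U → U.Nonempty → ∃ n, P n ⊆ U

/-- X is perfect: no isolated points. -/
def PerfectPhase (X : Type*) [TopologicalSpace X] : Prop :=
  ∀ x : X, ¬ IsOpen ({x} : Set X)

/-!
Quasi-continuity of `fⁿ` turns `n ∈ N₊(A, B)` into a nonempty open `A' ⊆ A` with `fⁿ(A') ⊆ B`.
Splitting a nonempty open set `A` into two disjoint nonempty open pieces (the space is perfect and
Hausdorff) and applying TT to them yields `n ≥ 1` and a nonempty open `A' ⊆ A` with `fⁿ(A') ⊆ A`;
iterating inside `A'` gives arbitrarily large return times, so `N₊(A, A)` is infinite. Finally,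
TT gives some `n₀ ∈ N₊(V, W) ∪ N₊(W, V)`: in the first case return times `n` of a shrunken `V'`
give `n₀ + n ∈ N₊(V, W)`, in the second return times `m` of a shrunken `W'` give
`m - n₀ ∈ N₊(V, W)`.
-/

lemma QuasiCont.exists_isOpen_image_subset {X Y : Type*} [TopologicalSpace X]
    [TopologicalSpace Y] {g : X → Y} (hg : QuasiCont g) {A : Set X} {B : Set Y}
    (hA : IsOpen A) (hB : IsOpen B) (h : (g '' A ∩ B).Nonempty) :
    ∃ A' ⊆ A, IsOpen A' ∧ A'.Nonempty ∧ g '' A' ⊆ B := by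
  obtain ⟨_, ⟨x, hxA, rfl⟩, hxB⟩ := h
  obtain ⟨A', hA', hA'ne, hA'A, hA'B⟩ := hg x B hB hxB A hA hxA
  exact ⟨A', hA'A, hA', hA'ne, hA'B⟩

lemma PerfectPhase.nontrivial_of_isOpen {X : Type*} [TopologicalSpace X]
    (hperf : PerfectPhase X) {A : Set X} (hA : IsOpen A) (hAne : A.Nonempty) : A.Nontrivial := by
  obtain ⟨x, rfl⟩ | hA' := hAne.exists_eq_singleton_or_nontrivial
  · exact absurd hA (hperf x)
  · exact hA'

lemma PerfectPhase.exists_disjoint_isOpen_subsets {X : Type*} [TopologicalSpace X] [T2Space X]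
    (hperf : PerfectPhase X) {A : Set X} (hA : IsOpen A) (hAne : A.Nonempty) :
    ∃ A₁ ⊆ A, ∃ A₂ ⊆ A, IsOpen A₁ ∧ A₁.Nonempty ∧ IsOpen A₂ ∧ A₂.Nonempty ∧ Disjoint A₁ A₂ := by
  obtain ⟨x, hx, y, hy, hxy⟩ := hperf.nontrivial_of_isOpen hA hAne
  obtain ⟨U, V, hU, hV, hxU, hyV, hUV⟩ := t2_separation hxy
  exact ⟨A ∩ U, inter_subset_left, A ∩ V, inter_subset_left, hA.inter hU, ⟨x, hx, hxU⟩,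
    hA.inter hV, ⟨y, hy, hyV⟩, hUV.mono inter_subset_right inter_subset_right⟩

section Nplus

variable {X : Type*} {f : X → X} {A B C : Set X} {m n : ℕ}

lemma Nplus_mono {A' B' : Set X} (hA : A ⊆ A') (hB : B ⊆ B') : Nplus f A B ⊆ Nplus f A' B' :=
  fun _ ⟨y, hy, hyB⟩ => ⟨y, image_mono hA hy, hB hyB⟩

lemma zero_notMem_Nplus_of_disjoint (h : Disjoint A B) : 0 ∉ Nplus f A B := by
  simpa [Nplus, not_nonempty_iff_eq_empty] using h.inter_eq

lemma add_mem_Nplus (hn : n ∈ Nplus f A B) (hm : f^[m] '' B ⊆ C) : m + n ∈ Nplus f A C := by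
  obtain ⟨_, ⟨x, hxA, rfl⟩, hxB⟩ := hn
  exact ⟨f^[m + n] x, mem_image_of_mem _ hxA, iterate_add_apply f m n x ▸ hm ⟨_, hxB, rfl⟩⟩

lemma sub_mem_Nplus (hn : n ∈ Nplus f A C) (hm : f^[m] '' A ⊆ B) (hmn : m ≤ n) :
    n - m ∈ Nplus f B C := by
  obtain ⟨_, ⟨x, hxA, rfl⟩, hxC⟩ := hn
  refine ⟨f^[n] x, ⟨f^[m] x, hm ⟨x, hxA, rfl⟩, ?_⟩, hxC⟩
  rw [← iterate_add_apply, Nat.sub_add_cancel hmn]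

end Nplus

section TT

variable {X : Type*} [TopologicalSpace X] [T2Space X] {f : X → X}
  (hperf : PerfectPhase X) (hqc : ∀ n : ℕ, QuasiCont (f^[n])) (hTT : TTprop f)
include hperf hqc hTT

lemma TTprop.exists_pos_iterate_image_subset {A : Set X} (hA : IsOpen A) (hAne : A.Nonempty) :
    ∃ n, 0 < n ∧ ∃ A' ⊆ A, IsOpen A' ∧ A'.Nonempty ∧ f^[n] '' A' ⊆ A := by
  obtain ⟨A₁, hA₁A, A₂, hA₂A, hA₁, hA₁ne, hA₂, hA₂ne, hdisj⟩ :=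
    hperf.exists_disjoint_isOpen_subsets hA hAne
  have key : ∀ {B C : Set X}, IsOpen B → IsOpen C → B ⊆ A → C ⊆ A → Disjoint B C →
      ∀ n ∈ Nplus f B C, 0 < n ∧ ∃ A' ⊆ A, IsOpen A' ∧ A'.Nonempty ∧ f^[n] '' A' ⊆ A := by
    intro B C hB hC hBA hCA hBC n hn
    obtain ⟨A', hA'B, hA', hA'ne, hA'C⟩ := (hqc n).exists_isOpen_image_subset hB hC hn
    refine ⟨Nat.pos_of_ne_zero ?_, A', hA'B.trans hBA, hA', hA'ne, hA'C.trans hCA⟩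
    rintro rfl
    exact zero_notMem_Nplus_of_disjoint hBC hn
  obtain ⟨n, hn | hn⟩ := hTT A₁ A₂ hA₁ hA₁ne hA₂ hA₂ne
  · exact ⟨n, key hA₁ hA₂ hA₁A hA₂A hdisj n hn⟩
  · exact ⟨n, key hA₂ hA₁ hA₂A hA₁A hdisj.symm n hn⟩

lemma TTprop.exists_gt_iterate_image_subset (k : ℕ) {A : Set X} (hA : IsOpen A)
    (hAne : A.Nonempty) : ∃ n, k < n ∧ ∃ A' ⊆ A, IsOpen A' ∧ A'.Nonempty ∧ f^[n] '' A' ⊆ A := by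
  induction k with
  | zero => exact hTT.exists_pos_iterate_image_subset hperf hqc hA hAne
  | succ k ih =>
    obtain ⟨n, hkn, A', hA'A, hA', hA'ne, hnA'⟩ := ih
    obtain ⟨m, hm, A'', hA''A', hA'', hA''ne, hmA''⟩ :=
      hTT.exists_pos_iterate_image_subset hperf hqc hA' hA'ne
    refine ⟨n + m, by omega, A'', hA''A'.trans hA'A, hA'', hA''ne, ?_⟩
    rw [iterate_add, image_comp]
    exact (image_mono hmA'').trans hnA'

lemma TTprop.Nplus_self_infinite {A : Set X} (hA : IsOpen A) (hAne : A.Nonempty) :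
    (Nplus f A A).Infinite := by
  refine infinite_of_forall_exists_gt fun k => ?_
  obtain ⟨n, hkn, A', hA'A, -, ⟨x, hx⟩, hnA'⟩ :=
    hTT.exists_gt_iterate_image_subset hperf hqc k hA hAne
  exact ⟨n, ⟨f^[n] x, mem_image_of_mem _ (hA'A hx), hnA' (mem_image_of_mem _ hx)⟩, hkn⟩

end TT

theorem TT_implies_TTplusplus {X : Type*} [TopologicalSpace X] [T2Space X]
    (f : X → X) (hperf : PerfectPhase X)
    (hqc : ∀ n : ℕ, QuasiCont (f^[n]))
    (hTT : TTprop f) :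
    ∀ V W : Set X, IsOpen V → V.Nonempty → IsOpen W → W.Nonempty →
      (Nplus f V W).Infinite := by
  intro V W hV hVne hW hWne
  refine infinite_of_forall_exists_gt fun k => ?_
  obtain ⟨n₀, hn₀ | hn₀⟩ := hTT V W hV hVne hW hWne
  · obtain ⟨V', hV'V, hV', hV'ne, hV'W⟩ := (hqc n₀).exists_isOpen_image_subset hV hW hn₀
    obtain ⟨n, hn, hkn⟩ := (hTT.Nplus_self_infinite hperf hqc hV' hV'ne).exists_gt k
    exact ⟨n₀ + n, add_mem_Nplus (Nplus_mono hV'V subset_rfl hn) hV'W, by omega⟩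
  · obtain ⟨W', hW'W, hW', hW'ne, hW'V⟩ := (hqc n₀).exists_isOpen_image_subset hW hV hn₀
    obtain ⟨m, hm, hkm⟩ := (hTT.Nplus_self_infinite hperf hqc hW' hW'ne).exists_gt (k + n₀)
    exact ⟨m - n₀, sub_mem_Nplus (Nplus_mono subset_rfl hW'W hm) hW'V (by omega), by omega⟩
end

section
/- Let (X,f) be a dynamical system with fⁿ quasi-continuous for all n ∈ ℕ, where X is a second category (non-meagre) space with a countable π-base. If (X,f) is topologically transitive (TT₊: for every pair of nonempty open sets U, V there exists n ∈ ℕ with fⁿ(U) ∩ V ≠ ∅), then there exists a point x ∈ X whose forward orbit {fⁿ(x) : n ∈ ℕ} is dense in X. -/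
open Set Function Topology

/-!
Let `P n` be a countable π-base. The points some neighbourhood of which is carried into `P n` by
a single iterate form an open set; it is dense because transitivity lets an iterate carry some
point of any open `U` into `P n`, and quasi-continuity of that iterate turns the point into a
nonempty open subset of `U`. The intersection of these open dense sets is residual, hence
nonempty in a space of second category, and the orbit of any of its points meets every `P n`.
-/

theorem QuasiCont.inter_interior_preimage_nonempty {X Y : Type*} [TopologicalSpace X]
    [TopologicalSpace Y] {f : X → Y} (hf : QuasiCont f) {U : Set X} {W : Set Y}
    (hU : IsOpen U) (hW : IsOpen W) (h : (f '' U ∩ W).Nonempty) :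
    (U ∩ interior (f ⁻¹' W)).Nonempty := by
  obtain ⟨_, ⟨x, hxU, rfl⟩, hxW⟩ := h
  obtain ⟨V, hVopen, ⟨v, hv⟩, hVU, hVW⟩ := hf x W hW hxW U hU hxU
  exact ⟨v, hVU hv, interior_maximal (image_subset_iff.1 hVW) hVopen hv⟩

theorem TTplus.dense_iUnion_interior_preimage_iterate {X : Type*} [TopologicalSpace X]
    {f : X → X} (hTT : TTplus f) (hqc : ∀ n : ℕ, QuasiCont (f^[n])) {W : Set X}
    (hW : IsOpen W) (hWne : W.Nonempty) : Dense (⋃ n, interior (f^[n] ⁻¹' W)) := by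
  refine dense_iff_inter_open.2 fun U hU hUne => ?_
  obtain ⟨n, hn⟩ := hTT U W hU hUne hW hWne
  obtain ⟨x, hxU, hxW⟩ := (hqc n).inter_interior_preimage_nonempty hU hW hn
  exact ⟨x, hxU, mem_iUnion_of_mem n hxW⟩

theorem dense_of_inter_piBase_nonempty {X : Type*} [TopologicalSpace X] {P : ℕ → Set X}
    (hP : ∀ U : Set X, IsOpen U → U.Nonempty → ∃ n, P n ⊆ U) {s : Set X}
    (hs : ∀ n, (P n ∩ s).Nonempty) : Dense s := by
  refine dense_iff_inter_open.2 fun U hU hUne => ?_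
  obtain ⟨n, hn⟩ := hP U hU hUne
  exact (hs n).mono (inter_subset_inter_left s hn)

theorem nonempty_of_mem_residual {X : Type*} [TopologicalSpace X]
    (h : ¬ IsMeagre (univ : Set X)) {s : Set X} (hs : s ∈ residual X) : s.Nonempty := by
  refine nonempty_iff_ne_empty.2 fun hs_empty => h ?_
  rwa [IsMeagre, compl_univ, ← hs_empty]

theorem TTplus_implies_dense_orbit {X : Type*} [TopologicalSpace X] (f : X → X)
    (hsecond : ¬ IsMeagre (Set.univ : Set X))
    (hpibase : CountablePiBase X)
    (hqc : ∀ n : ℕ, QuasiCont (f^[n]))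
    (hTT : TTplus f) :
    ∃ x : X, Dense (Set.range fun n : ℕ => f^[n] x) := by
  obtain ⟨P, hP, hPbase⟩ := hpibase
  have hres : (⋂ m, ⋃ n, interior (f^[n] ⁻¹' P m)) ∈ residual X :=
    countable_iInter_mem.2 fun m => residual_of_dense_open
      (isOpen_iUnion fun _ => isOpen_interior)
      (hTT.dense_iUnion_interior_preimage_iterate hqc (hP m).1 (hP m).2)
  obtain ⟨x, hx⟩ := nonempty_of_mem_residual hsecond hres
  refine ⟨x, dense_of_inter_piBase_nonempty hPbase fun m => ?_⟩
  obtain ⟨n, hn⟩ := mem_iUnion.1 (mem_iInter.1 hx m)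
  exact ⟨f^[n] x, mem_preimage.1 (interior_subset hn), mem_range_self n⟩
end

section
/- Let (X,f) be a dynamical system on a Hausdorff space X with isolated points, where fⁿ is quasi-continuous for all n ∈ ℕ. If (X,f) satisfies TT, then every point with dense forward orbit is an isolated point, i.e., Trans_f ⊆ Iso_X. -/
open Set Function Topology

/-
The dense orbit of `x` passes through the isolated point `p`, say `p = fⁿ x`. Quasi-continuity of
`fⁿ` at `x` gives a nonempty open `V` with `fⁿ '' V = {p}`. Either `V = {x}`, and `x` is isolated,
or `V \ {x}` is a nonempty open set, hence contains some `fᵐ x` with `m > 0`; then `fⁿ⁺ᵐ x = fⁿ x`,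
the orbit of `x` is finite, and a finite dense subset of a T₁ space forces the space to be finite,
hence discrete.
-/

theorem Function.IsPeriodicPt.finite_range_iterate {α : Type*} {f : α → α} {x : α} {n m : ℕ}
    (hm : 0 < m) (h : IsPeriodicPt f m (f^[n] x)) : (range fun k => f^[k] x).Finite := by
  refine ((finite_Iio (n + m)).image fun k => f^[k] x).subset ?_
  rintro _ ⟨k, rfl⟩
  rcases lt_or_ge k n with hk | hk
  · exact ⟨k, by simp only [mem_Iio]; omega, rfl⟩
  · refine ⟨(k - n) % m + n, by simp only [mem_Iio]; have := Nat.mod_lt (k - n) hm; omega, ?_⟩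
    calc f^[(k - n) % m + n] x = f^[(k - n) % m] (f^[n] x) := iterate_add_apply f _ _ x
      _ = f^[k - n] (f^[n] x) := h.iterate_mod_apply _
      _ = f^[k] x := by rw [← iterate_add_apply, Nat.sub_add_cancel hk]

theorem Set.Finite.isOpen_singleton_of_dense {X : Type*} [TopologicalSpace X] [T1Space X]
    {s : Set X} (hs : s.Finite) (hd : Dense s) (x : X) : IsOpen ({x} : Set X) := by
  have hs_univ : s = univ := hs.isClosed.closure_eq.symm.trans hd.closure_eq
  have : Finite X := finite_univ_iff.mp (hs_univ ▸ hs)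
  exact isOpen_discrete _

theorem trans_subset_iso_general {X : Type*} [TopologicalSpace X] [T2Space X]
    (f : X → X)
    (hiso : ∃ x : X, IsOpen ({x} : Set X))
    (hqc : ∀ n : ℕ, QuasiCont (f^[n])) :
    ∀ x : X, Dense (Set.range fun n : ℕ => f^[n] x) → IsOpen ({x} : Set X) := by
  intro x hx
  obtain ⟨p, hp⟩ := hiso
  obtain ⟨_, ⟨n, rfl⟩, rfl⟩ := hx.exists_mem_open hp (singleton_nonempty p)
  obtain ⟨V, hVo, hVne, -, hVp⟩ := hqc n x _ hp rfl univ isOpen_univ trivial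
  rcases (V \ {x}).eq_empty_or_nonempty with hV | hV
  · rwa [← (hVne.subset_singleton_iff.mp (sdiff_eq_empty.mp hV))]
  obtain ⟨_, ⟨m, rfl⟩, hmV, hmx⟩ := hx.exists_mem_open (hVo.sdiff isClosed_singleton) hV
  have hm : 0 < m := Nat.pos_of_ne_zero fun h => hmx (by rw [h]; rfl)
  have hper : IsPeriodicPt f m (f^[n] x) := by
    change f^[m] (f^[n] x) = f^[n] x
    rw [← iterate_add_apply, add_comm, iterate_add_apply]
    exact hVp (mem_image_of_mem _ hmV)
  exact (hper.finite_range_iterate hm).isOpen_singleton_of_dense hx x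

theorem trans_subset_iso {X : Type*} [TopologicalSpace X] [T2Space X]
    (f : X → X)
    (hiso : ∃ x : X, IsOpen ({x} : Set X))
    (hqc : ∀ n : ℕ, QuasiCont (f^[n]))
    (hTT : TTprop f) :
    ∀ x : X, Dense (Set.range fun n : ℕ => f^[n] x) → IsOpen ({x} : Set X) :=
  trans_subset_iso_general f hiso hqc
end
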